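/- arXiv:2408.05392 — 2 statements merged into one kernel-verified Lean document; each statement's English description precedes it below -/
import Mathlib

section
/- Let S ⊆ ℝⁿ be a split set and A⁽¹⁾,…,A⁽ᵖ⁾ ⊆ ℝⁿ be split sets. Write A⁽ⁱ⁾₀ = {x : πⁱᵀx ≤ ηⁱ}, A⁽ⁱ⁾₁ = {x : πⁱᵀx ≥ ηⁱ + 1}, and for u ∈ {0,1}ᵖ set A_u = ⋂ᵢ A⁽ⁱ⁾_{uᵢ}. Then S ∩ [0,1]ⁿ ⊆ (⋃ᵢ A⁽ⁱ⁾) ∩ [0,1]ⁿ if and only if for every u ∈ {0,1}ᵖ, either A_u ∩ [0,1]ⁿ ⊆ {x : πᵀx ≤ η} or A_u ∩ [0,1]ⁿ ⊆ {x : πᵀx ≥ η + 1}, where S = {x : η < πᵀx < η + 1}. -/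
/-!
A cell `A_u` of the split sets `A⁽ⁱ⁾` meets none of them, and so does its intersection `K`
with the cube. If the cube part of `S` is covered by the `A⁽ⁱ⁾`, the convex set `K` therefore
misses the open slab `S`; its image under `x ↦ πᵀx` is an interval avoiding `(η, η + 1)`, so `K`
lies on one side of `S`. Conversely, a point of `S` in the cube outside every `A⁽ⁱ⁾` lies in the
cell `A_u` read off from its sides, which then meets `S`.
-/

open Set

lemma Set.OrdConnected.subset_Iic_or_subset_Ici_of_disjoint {s : Set ℝ} (hs : s.OrdConnected)
    {a b : ℝ} (hab : a < b) (hdisj : Disjoint s (Ioo a b)) : s ⊆ Iic a ∨ s ⊆ Ici b := by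
  by_contra! h
  obtain ⟨⟨x, hxs, hx⟩, ⟨y, hys, hy⟩⟩ := not_subset.1 h.1, not_subset.1 h.2
  simp only [mem_Iic, mem_Ici, not_le] at hx hy
  have mem_Ioo_of_mem : ∀ z ∈ s, z ∉ Ioo a b := fun z hz => hdisj.notMem_of_mem_left hz
  by_cases hxb : x < b
  · exact mem_Ioo_of_mem x hxs ⟨hx, hxb⟩
  by_cases hya : a < y
  · exact mem_Ioo_of_mem y hys ⟨hya, hy⟩
  -- `y ≤ a < b ≤ x`, so the midpoint of `(a, b)` lies between `y` and `x`
  exact mem_Ioo_of_mem ((a + b) / 2) (hs.out hys hxs ⟨by linarith, by linarith⟩)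
    ⟨by linarith, by linarith⟩

section

variable {E : Type*} [AddCommGroup E] [Module ℝ E]

lemma Convex.subset_or_subset_of_disjoint_slab {K : Set E} (hK : Convex ℝ K) (f : E →ₗ[ℝ] ℝ)
    {a b : ℝ} (hab : a < b) (hdisj : Disjoint K {x | a < f x ∧ f x < b}) :
    K ⊆ {x | f x ≤ a} ∨ K ⊆ {x | b ≤ f x} := by
  have hdisj' : Disjoint (f '' K) (Ioo a b) := by
    rw [disjoint_image_left]
    simpa [disjoint_left] using hdisj
  exact ((hK.linear_image f).ordConnected.subset_Iic_or_subset_Ici_of_disjoint hab hdisj').imp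
    image_subset_iff.1 image_subset_iff.1

def splitSet (f : E →ₗ[ℝ] ℝ) (c : ℝ) : Set E := {x | c < f x ∧ f x < c + 1}

-- the paper's `A_u = ⋂ᵢ A⁽ⁱ⁾_{uᵢ}`, with `u i = true` selecting the side `c i + 1 ≤ g i x`
def splitCell {ι : Type*} (g : ι → E →ₗ[ℝ] ℝ) (c : ι → ℝ) (u : ι → Bool) : Set E :=
  {x | ∀ i, if u i then c i + 1 ≤ g i x else g i x ≤ c i}

variable {ι : Type*} (g : ι → E →ₗ[ℝ] ℝ) (c : ι → ℝ)

lemma convex_splitCell (u : ι → Bool) : Convex ℝ (splitCell g c u) := by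
  rw [splitCell, ofPred_forall]
  refine convex_iInter fun i => ?_
  cases u i
  · exact convex_halfSpace_le (g i).isLinear (c i)
  · exact convex_halfSpace_ge (g i).isLinear (c i + 1)

lemma disjoint_splitCell_splitSet (u : ι → Bool) (i : ι) :
    Disjoint (splitCell g c u) (splitSet (g i) (c i)) := by
  rw [disjoint_left]
  rintro x hx ⟨hlo, hhi⟩
  have hxi := hx i
  split_ifs at hxi <;> linarith

lemma mem_splitCell_of_notMem_iUnion {x : E} (hx : x ∉ ⋃ i, splitSet (g i) (c i)) :
    x ∈ splitCell g c (fun i => decide (c i + 1 ≤ g i x)) := by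
  intro i
  simp only [mem_iUnion, splitSet, mem_ofPred_eq, not_exists, not_and, not_lt] at hx
  by_cases hi : c i + 1 ≤ g i x
  · simp [hi]
  · simpa [hi] using le_of_not_gt fun hlt => hi (hx i hlt)

theorem inter_splitSet_subset_iUnion_splitSet_iff {C : Set E} (hC : Convex ℝ C)
    (f : E →ₗ[ℝ] ℝ) (a : ℝ) :
    C ∩ splitSet f a ⊆ ⋃ i, splitSet (g i) (c i) ↔
      ∀ u, C ∩ splitCell g c u ⊆ {x | f x ≤ a} ∨ C ∩ splitCell g c u ⊆ {x | a + 1 ≤ f x} := by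
  constructor
  · intro h u
    refine (hC.inter (convex_splitCell g c u)).subset_or_subset_of_disjoint_slab f
      (lt_add_one a) (disjoint_left.2 ?_)
    rintro x ⟨hxC, hxu⟩ hxS
    obtain ⟨i, hi⟩ := mem_iUnion.1 (h ⟨hxC, hxS⟩)
    exact disjoint_left.1 (disjoint_splitCell_splitSet g c u i) hxu hi
  · rintro h x ⟨hxC, hlo, hhi⟩
    by_contra hx
    have hxu := mem_splitCell_of_notMem_iUnion g c hx
    rcases h _ with hle | hge
    · exact (hle ⟨hxC, hxu⟩).not_gt hlo
    · exact (hge ⟨hxC, hxu⟩).not_gt hhi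

end

theorem stmt_11 (n p : ℕ) (π : Fin n → ℤ) (η : ℤ)
    (πs : Fin p → Fin n → ℤ) (ηs : Fin p → ℤ) :
    (∀ x : Fin n → ℝ, (∀ i, 0 ≤ x i ∧ x i ≤ 1) →
        (η : ℝ) < ∑ i, (π i : ℝ) * x i → (∑ i, (π i : ℝ) * x i) < (η : ℝ) + 1 →
        ∃ i : Fin p, (ηs i : ℝ) < ∑ j, (πs i j : ℝ) * x j ∧
          (∑ j, (πs i j : ℝ) * x j) < (ηs i : ℝ) + 1) ↔
    (∀ u : Fin p → Bool,
      (∀ x : Fin n → ℝ, (∀ i, 0 ≤ x i ∧ x i ≤ 1) →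
        (∀ i : Fin p, if u i then (ηs i : ℝ) + 1 ≤ ∑ j, (πs i j : ℝ) * x j
          else (∑ j, (πs i j : ℝ) * x j) ≤ (ηs i : ℝ)) →
        (∑ i, (π i : ℝ) * x i) ≤ (η : ℝ)) ∨
      (∀ x : Fin n → ℝ, (∀ i, 0 ≤ x i ∧ x i ≤ 1) →
        (∀ i : Fin p, if u i then (ηs i : ℝ) + 1 ≤ ∑ j, (πs i j : ℝ) * x j
          else (∑ j, (πs i j : ℝ) * x j) ≤ (ηs i : ℝ)) →
        (η : ℝ) + 1 ≤ ∑ i, (π i : ℝ) * x i)) := by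
  have := inter_splitSet_subset_iUnion_splitSet_iff
    (fun i => dotProductBilin ℝ ℝ fun j => (πs i j : ℝ)) (fun i => (ηs i : ℝ))
    (convex_pi (s := univ) fun _ _ => convex_Icc (0 : ℝ) 1) (dotProductBilin ℝ ℝ fun j => (π j : ℝ)) η
  simpa only [subset_def, mem_inter_iff, mem_univ_pi, mem_Icc, splitSet, splitCell, mem_iUnion,
    mem_ofPred_eq, dotProductBilin_apply_apply, dotProduct, and_imp] using this
end

section
/- Let π ∈ ℤ⁴ with 0 ≤ π₁ ≤ π₂ ≤ π₃ ≤ π₄ and η ∈ ℤ with π₄ ≤ η and π₁ + π₂ ≥ η + 1. Then {x ∈ [0,1]⁴ : η < πᵀx < η + 1} ⊆ {x ∈ [0,1]⁴ : 1 < x₁ + x₂ + x₃ + x₄ < 2}. -/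
/-!
Every weight is at most `η`, so `πᵀx ≤ η · ∑ xᵢ`; since `η ≥ 0`, the bound `η < πᵀx` forces
`∑ xᵢ > 1`. Conversely, with sorted nonnegative weights and `x ∈ [0,1]⁴`, the smallest value of
`πᵀx` subject to `∑ xᵢ ≥ 2` is `π₁ + π₂ ≥ η + 1`, so `πᵀx < η + 1` forces `∑ xᵢ < 2`.
-/

theorem weighted_sum_le_mul_sum {a₁ a₂ a₃ a₄ c x₁ x₂ x₃ x₄ : ℝ}
    (ha₁ : a₁ ≤ c) (ha₂ : a₂ ≤ c) (ha₃ : a₃ ≤ c) (ha₄ : a₄ ≤ c)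
    (hx₁ : 0 ≤ x₁) (hx₂ : 0 ≤ x₂) (hx₃ : 0 ≤ x₃) (hx₄ : 0 ≤ x₄) :
    a₁ * x₁ + a₂ * x₂ + a₃ * x₃ + a₄ * x₄ ≤ c * (x₁ + x₂ + x₃ + x₄) := by
  have h₁ := mul_le_mul_of_nonneg_right ha₁ hx₁
  have h₂ := mul_le_mul_of_nonneg_right ha₂ hx₂
  have h₃ := mul_le_mul_of_nonneg_right ha₃ hx₃
  have h₄ := mul_le_mul_of_nonneg_right ha₄ hx₄
  linarith

theorem add_le_weighted_sum_of_two_le_sum {a₁ a₂ a₃ a₄ x₁ x₂ x₃ x₄ : ℝ}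
    (ha₂ : 0 ≤ a₂) (h₁₂ : a₁ ≤ a₂) (h₂₃ : a₂ ≤ a₃) (h₂₄ : a₂ ≤ a₄)
    (hx₁ : x₁ ≤ 1) (hx₃ : 0 ≤ x₃) (hx₄ : 0 ≤ x₄) (hs : 2 ≤ x₁ + x₂ + x₃ + x₄) :
    a₁ + a₂ ≤ a₁ * x₁ + a₂ * x₂ + a₃ * x₃ + a₄ * x₄ := by
  have key : a₁ * x₁ + a₂ * x₂ + a₃ * x₃ + a₄ * x₄ - (a₁ + a₂) =
      (a₂ - a₁) * (1 - x₁) + a₂ * (x₁ + x₂ + x₃ + x₄ - 2) + (a₃ - a₂) * x₃ + (a₄ - a₂) * x₄ := by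
    ring
  have := mul_nonneg (sub_nonneg.2 h₁₂) (sub_nonneg.2 hx₁)
  have := mul_nonneg ha₂ (sub_nonneg.2 hs)
  have := mul_nonneg (sub_nonneg.2 h₂₃) hx₃
  have := mul_nonneg (sub_nonneg.2 h₂₄) hx₄
  linarith

theorem stmt_15 (π₁ π₂ π₃ π₄ η : ℤ) (h0 : 0 ≤ π₁) (h12 : π₁ ≤ π₂) (h23 : π₂ ≤ π₃)
    (h34 : π₃ ≤ π₄) (h4 : π₄ ≤ η) (h12η : η + 1 ≤ π₁ + π₂) :
    ∀ x₁ x₂ x₃ x₄ : ℝ, 0 ≤ x₁ → x₁ ≤ 1 → 0 ≤ x₂ → x₂ ≤ 1 → 0 ≤ x₃ → x₃ ≤ 1 →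
      0 ≤ x₄ → x₄ ≤ 1 →
      (η : ℝ) < π₁ * x₁ + π₂ * x₂ + π₃ * x₃ + π₄ * x₄ →
      π₁ * x₁ + π₂ * x₂ + π₃ * x₃ + π₄ * x₄ < (η : ℝ) + 1 →
      1 < x₁ + x₂ + x₃ + x₄ ∧ x₁ + x₂ + x₃ + x₄ < 2 := by
  intro x₁ x₂ x₃ x₄ hx₁ hx₁' hx₂ _ hx₃ _ hx₄ _ hlo hhi
  have hη : (0 : ℝ) ≤ η := by exact_mod_cast (by omega : (0 : ℤ) ≤ η)
  constructor
  · by_contra! hs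
    have hle := weighted_sum_le_mul_sum (c := (η : ℝ))
      (Int.cast_le.2 (by omega : π₁ ≤ η)) (Int.cast_le.2 (by omega : π₂ ≤ η))
      (Int.cast_le.2 (by omega : π₃ ≤ η)) (Int.cast_le.2 h4) hx₁ hx₂ hx₃ hx₄
    have := mul_le_of_le_one_right hη hs
    linarith
  · by_contra! hs
    have hge := add_le_weighted_sum_of_two_le_sum
      (Int.cast_nonneg (h0.trans h12)) (Int.cast_le.2 h12) (Int.cast_le.2 h23)
      (Int.cast_le.2 (h23.trans h34)) hx₁' hx₃ hx₄ hs
    have : (η : ℝ) + 1 ≤ π₁ + π₂ := by exact_mod_cast h12η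
    linarith
end
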